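/- arXiv:1102.1633 — 4 statements merged into one kernel-verified Lean document; each statement's English description precedes it below -/
import Mathlib

section
/- For $\alpha \in (-1,\infty)^d$, let $\mu_\alpha$ be the measure on $(0,\infty)^d$ with density $x_1^{2\alpha_1+1}\cdots x_d^{2\alpha_d+1}$ with respect to Lebesgue measure. Then there exist constants $0 < c \le C$ depending only on $d$ and $\alpha$ such that for all $x \in (0,\infty)^d$ and $r > 0$, $c\, r^d \prod_{i=1}^d (x_i+r)^{2\alpha_i+1} \le \mu_\alpha(B(x,r) \cap (0,\infty)^d) \le C\, r^d \prod_{i=1}^d (x_i+r)^{2\alpha_i+1}$, where $B(x,r)$ is the Euclidean ball. -/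
/-!
The ball `B(x, r)` lies between the coordinate boxes of half-widths `r / (d + 1)` and `r`
(as `d < (d + 1) ^ 2`), and on a box the measure factorizes into one-dimensional integrals
`∫ t ^ p` over `(x - s, x + s) ∩ (0, ∞)`, with `p = 2α + 1 > -1`. Such an integral is comparable
to `s (x + s) ^ p`: from below, integrate over `(x + s / 2, x + s)`, where `t` is comparable to
`x + s`, hence to `x + (d + 1) s`; from above, if `x > 2 s` then `t` is comparable to `x + s` on
the whole interval, and otherwise integrate `t ^ p` exactly over `(0, x + s)`, which has length
at most `3 s`.
-/

open MeasureTheory Set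
open scoped ENNReal

namespace MeasureTheory

theorem lintegral_fin_nat_prod_eq_prod {n : ℕ} {E : Type*} [MeasurableSpace E]
    {μ : Fin n → Measure E} [∀ i, SigmaFinite (μ i)]
    {f : Fin n → E → ℝ≥0∞} (hf : ∀ i, Measurable (f i)) :
    ∫⁻ x, ∏ i, f i (x i) ∂(Measure.pi μ) = ∏ i, ∫⁻ x, f i x ∂(μ i) := by
  induction n with
  | zero => simp
  | succ n ih =>
      have hsplit := measurePreserving_piFinSuccAbove μ 0
      simp only [Fin.succAbove_zero] at hsplit
      have htail : Measurable fun x : Fin n → E ↦ ∏ i, f i.succ (x i) :=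
        Finset.measurable_prod _ fun i _ ↦ (hf _).comp (measurable_pi_apply i)
      calc
        _ = ∫⁻ x : E × (Fin n → E), f 0 x.1 * ∏ i : Fin n, f i.succ (x.2 i)
            ∂((μ 0).prod (Measure.pi fun i ↦ μ i.succ)) := by
          rw [← hsplit.lintegral_comp_emb (MeasurableEquiv.measurableEmbedding _)]
          simp [MeasurableEquiv.piFinSuccAbove, Fin.prod_univ_succ, Fin.tail]
        _ = (∫⁻ x, f 0 x ∂μ 0) * ∏ i : Fin n, ∫⁻ x, f i.succ x ∂(μ i.succ) := by
          rw [← ih fun i ↦ hf _]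
          exact lintegral_prod_mul (hf 0).aemeasurable htail.aemeasurable
        _ = ∏ i, ∫⁻ x, f i x ∂(μ i) := by rw [Fin.prod_univ_succ]

theorem lintegral_fintype_prod_eq_prod {ι : Type*} [Fintype ι] {E : Type*} [MeasurableSpace E]
    {μ : ι → Measure E} [∀ i, SigmaFinite (μ i)]
    {f : ι → E → ℝ≥0∞} (hf : ∀ i, Measurable (f i)) :
    ∫⁻ x, ∏ i, f i (x i) ∂(Measure.pi μ) = ∏ i, ∫⁻ x, f i x ∂(μ i) := by
  let e := (Fintype.equivFin ι).symm
  rw [← (measurePreserving_piCongrLeft _ e).lintegral_comp_emb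
    (MeasurableEquiv.measurableEmbedding _)]
  simp_rw [← e.prod_comp, MeasurableEquiv.coe_piCongrLeft, Equiv.piCongrLeft_apply_apply]
  exact lintegral_fin_nat_prod_eq_prod fun i ↦ hf _

end MeasureTheory

namespace Real

theorem rpow_neg_abs_mul_rpow_le_rpow {p K u v : ℝ} (hK : 1 ≤ K) (hu : 0 < u) (huv : u ≤ v)
    (hvK : v ≤ K * u) : K ^ (-|p|) * v ^ p ≤ u ^ p := by
  have hK₀ : 0 < K := one_pos.trans_le hK
  have hv : 0 < v := hu.trans_le huv
  rcases le_or_gt 0 p with hp | hp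
  · calc K ^ (-|p|) * v ^ p = (v / K) ^ p := by
          rw [abs_of_nonneg hp, div_rpow hv.le hK₀.le, rpow_neg hK₀.le]; ring
      _ ≤ u ^ p := rpow_le_rpow (by positivity) ((div_le_iff₀ hK₀).2 (by linarith)) hp
  · calc K ^ (-|p|) * v ^ p ≤ 1 * v ^ p :=
          mul_le_mul_of_nonneg_right
            (rpow_le_one_of_one_le_of_nonpos hK (neg_nonpos.2 (abs_nonneg p))) (by positivity)
      _ ≤ u ^ p := (one_mul _).trans_le (rpow_le_rpow_of_nonpos hu huv hp.le)

theorem rpow_le_rpow_abs_mul_rpow {p K u v : ℝ} (hK : 1 ≤ K) (hu : 0 < u) (huv : u ≤ v)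
    (hvK : v ≤ K * u) : u ^ p ≤ K ^ |p| * v ^ p := by
  have hK₀ : 0 < K := one_pos.trans_le hK
  have hv : 0 < v := hu.trans_le huv
  rcases le_or_gt 0 p with hp | hp
  · calc u ^ p ≤ 1 * v ^ p := (one_mul (v ^ p)).symm ▸ rpow_le_rpow hu.le huv hp
      _ ≤ K ^ |p| * v ^ p :=
          mul_le_mul_of_nonneg_right (one_le_rpow hK (abs_nonneg p)) (by positivity)
  · calc u ^ p ≤ (v / K) ^ p :=
          rpow_le_rpow_of_nonpos (by positivity) ((div_le_iff₀ hK₀).2 (by linarith)) hp.le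
      _ = K ^ |p| * v ^ p := by
          rw [abs_of_neg hp, div_rpow hv.le hK₀.le, rpow_neg hK₀.le]; ring

end Real

theorem setLIntegral_Ioo_zero_rpow {p : ℝ} (hp : -1 < p) {b : ℝ} (hb : 0 ≤ b) :
    ∫⁻ t in Ioo 0 b, ENNReal.ofReal (t ^ p) = ENNReal.ofReal (b ^ (p + 1) / (p + 1)) := by
  have hint : IntegrableOn (fun t : ℝ ↦ t ^ p) (Ioo 0 b) :=
    (intervalIntegral.intervalIntegrable_rpow' hp).1.mono_set Ioo_subset_Ioc_self
  rw [← ofReal_integral_eq_lintegral_ofReal hint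
    ((ae_restrict_iff' measurableSet_Ioo).2 (.of_forall fun t ht ↦ Real.rpow_nonneg ht.1.le p)),
    ← integral_Ioc_eq_integral_Ioo, ← intervalIntegral.integral_of_le hb, integral_rpow (.inl hp),
    Real.zero_rpow (by linarith), sub_zero]

theorem ofReal_mul_rpow_le_setLIntegral_rpow (p : ℝ) {K x r : ℝ} (hK : 1 ≤ K) (hx : 0 ≤ x)
    (hr : 0 < r) :
    ENNReal.ofReal ((2 * K) ^ (-|p|) / (2 * K) * r * (x + r) ^ p) ≤
      ∫⁻ t in Ioo (x - r / K) (x + r / K) ∩ Ioi 0, ENNReal.ofReal (t ^ p) := by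
  have hK₀ : 0 < K := one_pos.trans_le hK
  have hr₂ : 0 < r / (2 * K) := by positivity
  have hr₂K : r / (2 * K) < r / K := div_lt_div_of_pos_left hr hK₀ (by linarith)
  have hJ : Ioo (x + r / (2 * K)) (x + r / K) ⊆ Ioo (x - r / K) (x + r / K) ∩ Ioi 0 :=
    fun t ht ↦ ⟨⟨by linarith [ht.1], ht.2⟩, mem_Ioi.2 (by linarith [ht.1])⟩
  have hbound : ∀ t ∈ Ioo (x + r / (2 * K)) (x + r / K),
      ENNReal.ofReal ((2 * K) ^ (-|p|) * (x + r) ^ p) ≤ ENNReal.ofReal (t ^ p) := by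
    intro t ⟨ht₁, ht₂⟩
    have : r / K ≤ r := div_le_self hr.le hK
    have : x + r ≤ 2 * K * t := by
      have : r = 2 * K * (r / (2 * K)) := by field_simp
      nlinarith
    exact ENNReal.ofReal_le_ofReal
      (Real.rpow_neg_abs_mul_rpow_le_rpow (by linarith) (by linarith) (by linarith) this)
  calc ENNReal.ofReal ((2 * K) ^ (-|p|) / (2 * K) * r * (x + r) ^ p)
      = ∫⁻ _ in Ioo (x + r / (2 * K)) (x + r / K),
          ENNReal.ofReal ((2 * K) ^ (-|p|) * (x + r) ^ p) := by
        rw [setLIntegral_const, Real.volume_Ioo, ← ENNReal.ofReal_mul (by positivity)]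
        congr 1
        field_simp
        ring
    _ ≤ ∫⁻ t in Ioo (x + r / (2 * K)) (x + r / K), ENNReal.ofReal (t ^ p) :=
        setLIntegral_mono (by fun_prop) hbound
    _ ≤ _ := lintegral_mono_set hJ

theorem setLIntegral_rpow_le {p : ℝ} (hp : -1 < p) {x r : ℝ} (hx : 0 ≤ x) (hr : 0 < r) :
    ∫⁻ t in Ioo (x - r) (x + r) ∩ Ioi 0, ENNReal.ofReal (t ^ p) ≤
      ENNReal.ofReal (max (3 / (p + 1)) (2 * 3 ^ |p|) * r * (x + r) ^ p) := by
  have hp₁ : 0 < p + 1 := by linarith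
  have hxr : 0 < x + r := by linarith
  have hxr_pow : 0 < (x + r) ^ p := Real.rpow_pos_of_pos hxr p
  rcases le_or_gt x (2 * r) with hxr₂ | hxr₂
  · calc ∫⁻ t in Ioo (x - r) (x + r) ∩ Ioi 0, ENNReal.ofReal (t ^ p)
        ≤ ∫⁻ t in Ioo 0 (x + r), ENNReal.ofReal (t ^ p) :=
          lintegral_mono_set fun t ⟨⟨_, ht⟩, ht₀⟩ ↦ ⟨ht₀, ht⟩
      _ = ENNReal.ofReal ((x + r) * (x + r) ^ p / (p + 1)) := by
          rw [setLIntegral_Ioo_zero_rpow hp hxr.le, Real.rpow_add_one hxr.ne', mul_comm]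
      _ ≤ _ := by
          refine ENNReal.ofReal_le_ofReal ((div_le_iff₀ hp₁).2 ?_)
          have : 3 ≤ max (3 / (p + 1)) (2 * 3 ^ |p|) * (p + 1) :=
            (div_le_iff₀ hp₁).1 (le_max_left _ _)
          calc (x + r) * (x + r) ^ p ≤ 3 * r * (x + r) ^ p := by gcongr; linarith
            _ ≤ max (3 / (p + 1)) (2 * 3 ^ |p|) * (p + 1) * r * (x + r) ^ p := by gcongr
            _ = _ := by ring
  · calc ∫⁻ t in Ioo (x - r) (x + r) ∩ Ioi 0, ENNReal.ofReal (t ^ p)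
        ≤ ∫⁻ _ in Ioo (x - r) (x + r), ENNReal.ofReal (3 ^ |p| * (x + r) ^ p) := by
          refine (lintegral_mono_set inter_subset_left).trans
            (setLIntegral_mono measurable_const fun t ht ↦ ENNReal.ofReal_le_ofReal ?_)
          exact Real.rpow_le_rpow_abs_mul_rpow (by norm_num) (by linarith [ht.1]) ht.2.le
            (by linarith [ht.1])
      _ = ENNReal.ofReal (2 * 3 ^ |p| * r * (x + r) ^ p) := by
          rw [setLIntegral_const, Real.volume_Ioo, ← ENNReal.ofReal_mul (by positivity)]
          ring_nf
      _ ≤ _ := by gcongr; exact le_max_right _ _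

theorem ENNReal.ofReal_prod_mul_pow_mul_prod {ι : Type*} [Fintype ι] {a b : ι → ℝ}
    (ha : ∀ i, 0 ≤ a i) (hb : ∀ i, 0 ≤ b i) {r : ℝ} (hr : 0 ≤ r) :
    ENNReal.ofReal ((∏ i, a i) * r ^ Fintype.card ι * ∏ i, b i) =
      ∏ i, ENNReal.ofReal (a i * r * b i) := by
  rw [← ENNReal.ofReal_prod_of_nonneg fun i _ ↦ mul_nonneg (mul_nonneg (ha i) hr) (hb i),
    Finset.prod_mul_distrib, Finset.prod_mul_distrib, Finset.prod_const, Finset.card_univ]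

section PowerWeightedVolume

variable {ι : Type*} [Fintype ι]

noncomputable def powerWeightedVolume (p : ι → ℝ) : Measure (EuclideanSpace ℝ ι) :=
  (volume.restrict {y | ∀ i, 0 < y i}).withDensity fun y ↦ ENNReal.ofReal (∏ i, y i ^ p i)

theorem powerWeightedVolume_setOf_forall_mem (p : ι → ℝ) {t : ι → Set ℝ}
    (ht : ∀ i, MeasurableSet (t i)) :
    powerWeightedVolume p {y | ∀ i, y i ∈ t i} =
      ∏ i, ∫⁻ u in t i ∩ Ioi 0, ENNReal.ofReal (u ^ p i) := by
  have hbox : MeasurableSet {y : EuclideanSpace ℝ ι | ∀ i, y i ∈ t i} := by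
    simp_rw [ofPred_forall]
    exact .iInter fun i ↦ (ht i).preimage (by fun_prop)
  have hpreimage : WithLp.toLp 2 ⁻¹' ({y : EuclideanSpace ℝ ι | ∀ i, y i ∈ t i} ∩
      {y | ∀ i, 0 < y i}) = univ.pi fun i ↦ t i ∩ Ioi 0 := by
    ext y
    simp [forall_and]
  have hpi : MeasurableSet (univ.pi fun i ↦ t i ∩ Ioi 0) :=
    .univ_pi fun i ↦ (ht i).inter measurableSet_Ioi
  rw [powerWeightedVolume, withDensity_apply _ hbox, Measure.restrict_restrict hbox,
    ← (PiLp.volume_preserving_toLp ι).setLIntegral_comp_preimage_emb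
      (MeasurableEquiv.toLp 2 (ι → ℝ)).measurableEmbedding, hpreimage,
    setLIntegral_congr_fun hpi fun y hy ↦ ENNReal.ofReal_prod_of_nonneg fun i _ ↦
      Real.rpow_nonneg (hy i (mem_univ i)).2.le (p i),
    volume_pi, Measure.restrict_pi_pi]
  exact lintegral_fintype_prod_eq_prod (f := fun i u ↦ ENNReal.ofReal (u ^ p i)) fun i ↦ by
    fun_prop

theorem ball_subset_setOf_forall_mem_Ioo (x : EuclideanSpace ℝ ι) (r : ℝ) :
    Metric.ball x r ⊆ {y | ∀ i, y i ∈ Ioo (x i - r) (x i + r)} := by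
  intro y hy i
  have := (PiLp.dist_apply_le y x i).trans_lt hy
  rw [Real.dist_eq, abs_lt] at this
  constructor <;> linarith

theorem setOf_forall_mem_Ioo_subset_ball (x : EuclideanSpace ℝ ι) {r s : ℝ} (hr : 0 < r)
    (hs : Fintype.card ι * s ^ 2 < r ^ 2) :
    {y | ∀ i, y i ∈ Ioo (x i - s) (x i + s)} ⊆ Metric.ball x r := by
  intro y hy
  rw [Metric.mem_ball, EuclideanSpace.dist_eq, Real.sqrt_lt' hr]
  calc ∑ i, dist (y i) (x i) ^ 2 ≤ ∑ _ : ι, s ^ 2 := by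
        refine Finset.sum_le_sum fun i _ ↦ ?_
        rw [Real.dist_eq, sq_abs]
        exact sq_le_sq' (by linarith [(hy i).1]) (by linarith [(hy i).2])
    _ < r ^ 2 := by simpa using hs

theorem exists_ofReal_le_powerWeightedVolume_ball (p : ι → ℝ) :
    ∃ c > 0, ∀ (x : EuclideanSpace ℝ ι) (r : ℝ), (∀ i, 0 ≤ x i) → 0 < r →
      ENNReal.ofReal (c * r ^ Fintype.card ι * ∏ i, (x i + r) ^ p i) ≤
        powerWeightedVolume p (Metric.ball x r) := by
  set n : ℝ := (Fintype.card ι : ℝ)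
  have hK : 1 ≤ n + 1 := by simp [n]
  refine ⟨∏ i, (2 * (n + 1)) ^ (-|p i|) / (2 * (n + 1)), by positivity, fun x r hx hr ↦ ?_⟩
  have hs : n * (r / (n + 1)) ^ 2 < r ^ 2 := by
    rw [div_pow, ← mul_div_assoc, div_lt_iff₀ (by positivity)]
    have : 0 ≤ n := Nat.cast_nonneg _
    nlinarith [mul_pos (pow_pos hr 2) (by positivity : 0 < n ^ 2 + n + 1)]
  calc ENNReal.ofReal ((∏ i, (2 * (n + 1)) ^ (-|p i|) / (2 * (n + 1))) * r ^ Fintype.card ι *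
        ∏ i, (x i + r) ^ p i)
      = ∏ i, ENNReal.ofReal ((2 * (n + 1)) ^ (-|p i|) / (2 * (n + 1)) * r * (x i + r) ^ p i) :=
        ENNReal.ofReal_prod_mul_pow_mul_prod (fun i ↦ by positivity)
          (fun i ↦ Real.rpow_nonneg (by linarith [hx i]) _) hr.le
    _ ≤ ∏ i, ∫⁻ u in Ioo (x i - r / (n + 1)) (x i + r / (n + 1)) ∩ Ioi 0,
          ENNReal.ofReal (u ^ p i) :=
        Finset.prod_le_prod' fun i _ ↦ ofReal_mul_rpow_le_setLIntegral_rpow (p i) hK (hx i) hr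
    _ = powerWeightedVolume p {y | ∀ i, y i ∈ Ioo (x i - r / (n + 1)) (x i + r / (n + 1))} :=
        (powerWeightedVolume_setOf_forall_mem p fun _ ↦ measurableSet_Ioo).symm
    _ ≤ powerWeightedVolume p (Metric.ball x r) :=
        measure_mono (setOf_forall_mem_Ioo_subset_ball x hr hs)

theorem exists_powerWeightedVolume_ball_le_ofReal {p : ι → ℝ} (hp : ∀ i, -1 < p i) :
    ∃ C > 0, ∀ (x : EuclideanSpace ℝ ι) (r : ℝ), (∀ i, 0 ≤ x i) → 0 < r →
      powerWeightedVolume p (Metric.ball x r) ≤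
        ENNReal.ofReal (C * r ^ Fintype.card ι * ∏ i, (x i + r) ^ p i) := by
  refine ⟨∏ i, max (3 / (p i + 1)) (2 * 3 ^ |p i|),
    Finset.prod_pos fun i _ ↦ lt_max_of_lt_right (by positivity), fun x r hx hr ↦ ?_⟩
  calc powerWeightedVolume p (Metric.ball x r)
      ≤ powerWeightedVolume p {y | ∀ i, y i ∈ Ioo (x i - r) (x i + r)} :=
        measure_mono (ball_subset_setOf_forall_mem_Ioo x r)
    _ = ∏ i, ∫⁻ u in Ioo (x i - r) (x i + r) ∩ Ioi 0, ENNReal.ofReal (u ^ p i) :=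
        powerWeightedVolume_setOf_forall_mem p fun _ ↦ measurableSet_Ioo
    _ ≤ ∏ i, ENNReal.ofReal (max (3 / (p i + 1)) (2 * 3 ^ |p i|) * r * (x i + r) ^ p i) :=
        Finset.prod_le_prod' fun i _ ↦ setLIntegral_rpow_le (hp i) (hx i) hr
    _ = _ :=
        (ENNReal.ofReal_prod_mul_pow_mul_prod (fun i ↦ (lt_max_of_lt_right (by positivity)).le)
          (fun i ↦ Real.rpow_nonneg (by linarith [hx i]) _) hr.le).symm

end PowerWeightedVolume

theorem stmt_0_general (d : ℕ) (α : Fin d → ℝ) (hα : ∀ i, -1 < α i) :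
    ∃ c C : ℝ, 0 < c ∧ c ≤ C ∧
      ∀ (x : EuclideanSpace ℝ (Fin d)) (r : ℝ), (∀ i, 0 < x i) → 0 < r →
        ENNReal.ofReal (c * r ^ d * ∏ i, (x i + r) ^ (2 * α i + 1)) ≤
          (((volume : Measure (EuclideanSpace ℝ (Fin d))).restrict
              {y : EuclideanSpace ℝ (Fin d) | ∀ i, 0 < y i}).withDensity
            (fun y => ENNReal.ofReal (∏ i, y i ^ (2 * α i + 1)))) (Metric.ball x r) ∧
        (((volume : Measure (EuclideanSpace ℝ (Fin d))).restrict
              {y : EuclideanSpace ℝ (Fin d) | ∀ i, 0 < y i}).withDensity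
            (fun y => ENNReal.ofReal (∏ i, y i ^ (2 * α i + 1)))) (Metric.ball x r) ≤
          ENNReal.ofReal (C * r ^ d * ∏ i, (x i + r) ^ (2 * α i + 1)) := by
  obtain ⟨c, hc, hlower⟩ := exists_ofReal_le_powerWeightedVolume_ball fun i ↦ 2 * α i + 1
  obtain ⟨C, hC, hupper⟩ :=
    exists_powerWeightedVolume_ball_le_ofReal fun i ↦ (by linarith [hα i] : -1 < 2 * α i + 1)
  refine ⟨min c C, C, lt_min hc hC, min_le_right c C, fun x r hx hr ↦ ?_⟩
  have hx₀ : ∀ i, 0 ≤ x i := fun i ↦ (hx i).le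
  specialize hlower x r hx₀ hr
  specialize hupper x r hx₀ hr
  rw [Fintype.card_fin] at hlower hupper
  refine ⟨le_trans (ENNReal.ofReal_le_ofReal ?_) hlower, hupper⟩
  have : 0 ≤ ∏ i, (x i + r) ^ (2 * α i + 1) :=
    Finset.prod_nonneg fun i _ ↦ Real.rpow_nonneg (by linarith [hx i]) _
  gcongr
  exact min_le_left c C

theorem stmt_0 (d : ℕ) (hd : 1 ≤ d) (α : Fin d → ℝ) (hα : ∀ i, -1 < α i) :
    ∃ c C : ℝ, 0 < c ∧ c ≤ C ∧
      ∀ (x : EuclideanSpace ℝ (Fin d)) (r : ℝ), (∀ i, 0 < x i) → 0 < r →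
        ENNReal.ofReal (c * r ^ d * ∏ i, (x i + r) ^ (2 * α i + 1)) ≤
          (((volume : Measure (EuclideanSpace ℝ (Fin d))).restrict
              {y : EuclideanSpace ℝ (Fin d) | ∀ i, 0 < y i}).withDensity
            (fun y => ENNReal.ofReal (∏ i, y i ^ (2 * α i + 1)))) (Metric.ball x r) ∧
        (((volume : Measure (EuclideanSpace ℝ (Fin d))).restrict
              {y : EuclideanSpace ℝ (Fin d) | ∀ i, 0 < y i}).withDensity
            (fun y => ENNReal.ofReal (∏ i, y i ^ (2 * α i + 1)))) (Metric.ball x r) ≤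
          ENNReal.ofReal (C * r ^ d * ∏ i, (x i + r) ^ (2 * α i + 1)) :=
  stmt_0_general d α hα
end

section
/- Let $a \ge -1/2$, $b \ge 0$ and $\lambda > 0$ be fixed. There is a constant $C$ such that for all real numbers $A > B > 0$, $\int_{-1}^1 \frac{(1-s^2)^{a+b-1/2}}{(A-Bs)^{a+1/2+\lambda}}\, ds \le \frac{C}{A^{a+1/2}(A-B)^{\lambda}}$ (here we assume $a+b > -1/2$ so the density makes sense). -/
open MeasureTheory Real

set_option maxHeartbeats 2000000 in
theorem stmt_2 (a b lam : ℝ) (ha : -1/2 ≤ a) (hb : 0 ≤ b) (hlam : 0 < lam)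
    (hab : -1/2 < a + b) :
    ∃ C : ℝ, 0 < C ∧ ∀ A B : ℝ, 0 < B → B < A →
      ∫ s in Set.Ioo (-1 : ℝ) 1, (1 - s ^ 2) ^ (a + b - 1/2) / (A - B * s) ^ (a + 1/2 + lam)
        ≤ C / (A ^ (a + 1/2) * (A - B) ^ lam) := by
  obtain ⟨r, hrdef⟩ : ∃ r : ℝ, a + 1/2 = r := ⟨_, rfl⟩
  obtain ⟨q, hqdef⟩ : ∃ q : ℝ, a + b - 1/2 = q := ⟨_, rfl⟩
  obtain ⟨p, hpdef⟩ : ∃ p : ℝ, r + lam = p := ⟨_, rfl⟩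
  rw [hrdef, hqdef]
  simp only [hpdef]
  have hq1 : (-1 : ℝ) < q := by linarith
  have hq1' : (0 : ℝ) < q + 1 := by linarith
  have hr0 : (0 : ℝ) ≤ r := by linarith
  have hp0 : (0 : ℝ) < p := by linarith
  have hqr : q + 1 = r + b := by linarith
  obtain ⟨M, hMdef⟩ : ∃ M : ℝ, max 1 ((2 : ℝ) ^ q) = M := ⟨_, rfl⟩
  have hM0 : (0 : ℝ) < M := hMdef ▸ lt_of_lt_of_le one_pos (le_max_left _ _)
  have hMx : ∀ x : ℝ, 1 ≤ x → x ≤ 2 → x ^ q ≤ M := by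
    intro x h1 h2
    rw [← hMdef]
    rcases le_or_gt 0 q with h | h
    · exact le_trans (Real.rpow_le_rpow (by linarith) h2 h) (le_max_right _ _)
    · exact le_trans (Real.rpow_le_one_of_one_le_of_nonpos h1 h.le) (le_max_left _ _)
  refine ⟨M * (2 / (q + 1) + 1 / lam),
    mul_pos hM0 (add_pos (div_pos two_pos hq1') (div_pos one_pos hlam)), ?_⟩
  intro A B hB hBA
  have hA : 0 < A := hB.trans hBA
  have hD : 0 < A - B := by linarith
  obtain ⟨X, hXdef⟩ : ∃ X : ℝ, A ^ r * (A - B) ^ lam = X := ⟨_, rfl⟩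
  rw [hXdef]
  have hX : 0 < X :=
    hXdef ▸ mul_pos (Real.rpow_pos_of_pos hA _) (Real.rpow_pos_of_pos hD _)
  obtain ⟨s0, hs0def⟩ : ∃ s0 : ℝ, B / A = s0 := ⟨_, rfl⟩
  have hs00 : 0 < s0 := hs0def ▸ div_pos hB hA
  have hs01 : s0 < 1 := hs0def ▸ (div_lt_one hA).2 hBA
  have h1s0 : 1 - s0 = (A - B) / A := by rw [← hs0def]; field_simp
  have h1s0pos : 0 < 1 - s0 := by linarith
  have hApsplit : A ^ p = A ^ r * A ^ lam := by
    rw [← Real.rpow_add hA]; congr 1; linarith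
  set F : ℝ → ℝ := fun s => (1 - s ^ 2) ^ q / (A - B * s) ^ p with hFdef
  have hFm : Measurable F := by rw [hFdef]; fun_prop
  have hFnn : ∀ s ∈ Set.Icc (-1 : ℝ) 1, 0 ≤ F s := by
    intro s hs
    obtain ⟨h1, h2⟩ := hs
    have e1 : (0:ℝ) ≤ (1 - s) * (1 + s) := mul_nonneg (by linarith) (by linarith)
    have e2 : B * s ≤ B * 1 := mul_le_mul_of_nonneg_left h2 hB.le
    exact div_nonneg (Real.rpow_nonneg (by nlinarith [e1]) q)
      (Real.rpow_nonneg (by nlinarith [e2]) p)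
  -- pointwise bounds on the three pieces
  have hbd1 : ∀ s ∈ Set.Ioc (-1 : ℝ) 0, F s ≤ (M / X) * (1 + s) ^ q := by
    intro s hs
    obtain ⟨hs1, hs2⟩ := hs
    have h1s : (0 : ℝ) < 1 - s := by linarith
    have h1s' : (0 : ℝ) < 1 + s := by linarith
    have hnum : (1 - s ^ 2) ^ q ≤ M * (1 + s) ^ q := by
      have hfac : (1 - s ^ 2) = (1 - s) * (1 + s) := by ring
      rw [hfac, Real.mul_rpow h1s.le h1s'.le]
      exact mul_le_mul_of_nonneg_right (hMx _ (by linarith) (by linarith))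
        (Real.rpow_nonneg h1s'.le q)
    have hden : X ≤ (A - B * s) ^ p := by
      have hABs : A ≤ A - B * s := by nlinarith [mul_nonneg hB.le (neg_nonneg.2 hs2)]
      calc X = A ^ r * (A - B) ^ lam := hXdef.symm
        _ ≤ A ^ r * A ^ lam :=
            mul_le_mul_of_nonneg_left (Real.rpow_le_rpow hD.le (by linarith) hlam.le)
              (Real.rpow_nonneg hA.le _)
        _ = A ^ p := hApsplit.symm
        _ ≤ (A - B * s) ^ p := Real.rpow_le_rpow hA.le hABs hp0.le
    calc F s ≤ (M * (1 + s) ^ q) / X :=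
          div_le_div₀ (mul_nonneg hM0.le (Real.rpow_nonneg h1s'.le q)) hnum hX hden
      _ = (M / X) * (1 + s) ^ q := by ring
  have hbd2 : ∀ s ∈ Set.Ioc (0 : ℝ) s0, F s ≤ (M * A ^ (-p)) * (1 - s) ^ (-1 - lam) := by
    intro s hs
    obtain ⟨hs1, hs2⟩ := hs
    have h1s : (0 : ℝ) < 1 - s := by linarith
    have h1s' : (0 : ℝ) < 1 + s := by linarith
    have hnum : (1 - s ^ 2) ^ q ≤ M * (1 - s) ^ q := by
      have hfac : (1 - s ^ 2) = (1 + s) * (1 - s) := by ring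
      rw [hfac, Real.mul_rpow h1s'.le h1s.le]
      exact mul_le_mul_of_nonneg_right (hMx _ (by linarith) (by linarith))
        (Real.rpow_nonneg h1s.le q)
    have hden : A ^ p * (1 - s) ^ p ≤ (A - B * s) ^ p := by
      have hABs : A * (1 - s) ≤ A - B * s := by nlinarith [mul_nonneg hD.le hs1.le]
      calc A ^ p * (1 - s) ^ p = (A * (1 - s)) ^ p := (Real.mul_rpow hA.le h1s.le).symm
        _ ≤ (A - B * s) ^ p := Real.rpow_le_rpow (by positivity) hABs hp0.le
    have step1 : F s ≤ (M * (1 - s) ^ q) / (A ^ p * (1 - s) ^ p) :=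
      div_le_div₀ (mul_nonneg hM0.le (Real.rpow_nonneg h1s.le q)) hnum
        (mul_pos (Real.rpow_pos_of_pos hA p) (Real.rpow_pos_of_pos h1s p)) hden
    have u1 : (1 - s) ^ b * (1 - s) ^ (-1 - lam) = (1 - s) ^ q / (1 - s) ^ p := by
      rw [← Real.rpow_add h1s, ← Real.rpow_sub h1s]; congr 1; linarith
    have step2 : (M * (1 - s) ^ q) / (A ^ p * (1 - s) ^ p)
        = (M * A ^ (-p)) * ((1 - s) ^ b * (1 - s) ^ (-1 - lam)) := by
      rw [u1, Real.rpow_neg hA.le]; ring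
    have step3 : (1 - s) ^ b * (1 - s) ^ (-1 - lam) ≤ 1 * (1 - s) ^ (-1 - lam) :=
      mul_le_mul_of_nonneg_right (Real.rpow_le_one h1s.le (by linarith) hb)
        (Real.rpow_nonneg h1s.le _)
    calc F s ≤ (M * A ^ (-p)) * ((1 - s) ^ b * (1 - s) ^ (-1 - lam)) := step2 ▸ step1
      _ ≤ (M * A ^ (-p)) * (1 * (1 - s) ^ (-1 - lam)) :=
          mul_le_mul_of_nonneg_left step3
            (mul_nonneg hM0.le (Real.rpow_nonneg hA.le _))
      _ = (M * A ^ (-p)) * (1 - s) ^ (-1 - lam) := by ring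
  have hbd3 : ∀ s ∈ Set.Ioo s0 (1 : ℝ), F s ≤ (M * (A - B) ^ (-p)) * (1 - s) ^ q := by
    intro s hs
    obtain ⟨hs1, hs2⟩ := hs
    have h1s : (0 : ℝ) < 1 - s := by linarith
    have h1s' : (0 : ℝ) < 1 + s := by linarith
    have hnum : (1 - s ^ 2) ^ q ≤ M * (1 - s) ^ q := by
      have hfac : (1 - s ^ 2) = (1 + s) * (1 - s) := by ring
      rw [hfac, Real.mul_rpow h1s'.le h1s.le]
      exact mul_le_mul_of_nonneg_right (hMx _ (by linarith) (by linarith))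
        (Real.rpow_nonneg h1s.le q)
    have hden : (A - B) ^ p ≤ (A - B * s) ^ p := by
      apply Real.rpow_le_rpow hD.le _ hp0.le
      nlinarith [mul_nonneg hB.le (by linarith : (0:ℝ) ≤ 1 - s)]
    calc F s ≤ (M * (1 - s) ^ q) / (A - B) ^ p :=
          div_le_div₀ (mul_nonneg hM0.le (Real.rpow_nonneg h1s.le q)) hnum
            (Real.rpow_pos_of_pos hD p) hden
      _ = (M * (A - B) ^ (-p)) * (1 - s) ^ q := by
          rw [Real.rpow_neg hD.le]; ring
  -- integrability of the comparison functions
  have hg1int : IntegrableOn (fun s : ℝ => (1 + s) ^ q) (Set.Ioc (-1 : ℝ) 0) volume := by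
    have h := (intervalIntegral.intervalIntegrable_rpow' (a := 0) (b := 1) hq1).comp_add_left 1
    simp only [zero_sub, sub_self] at h
    rwa [intervalIntegrable_iff_integrableOn_Ioc_of_le (by norm_num)] at h
  have hg2int : IntegrableOn (fun s : ℝ => (1 - s) ^ (-1 - lam)) (Set.Ioc (0 : ℝ) s0) volume := by
    apply IntegrableOn.mono_set _ Set.Ioc_subset_Icc_self
    apply ContinuousOn.integrableOn_compact isCompact_Icc
    apply ContinuousOn.rpow_const (continuousOn_const.sub continuousOn_id)
    intro x hx
    left
    have hx2 : x ≤ s0 := hx.2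
    have : 0 < 1 - x := by linarith
    exact ne_of_gt this
  have hg3int : IntegrableOn (fun s : ℝ => (1 - s) ^ q) (Set.Ioo s0 (1 : ℝ)) volume := by
    apply IntegrableOn.mono_set _ Set.Ioo_subset_Ioc_self
    have h := (intervalIntegral.intervalIntegrable_rpow'
      (a := 0) (b := 1 - s0) hq1).comp_sub_left 1
    simp only [sub_zero, sub_sub_cancel] at h
    have h2 := h.symm
    rwa [intervalIntegrable_iff_integrableOn_Ioc_of_le hs01.le] at h2
  -- integrability of F on each piece
  have hFae : ∀ (S : Set ℝ), MeasurableSet S → S ⊆ Set.Icc (-1 : ℝ) 1 →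
      ∀ (g : ℝ → ℝ), IntegrableOn g S volume → (∀ s ∈ S, F s ≤ g s) →
      IntegrableOn F S volume := by
    intro S hSm hSsub g hg hle
    apply Integrable.mono' hg (hFm.aestronglyMeasurable.restrict)
    filter_upwards [ae_restrict_mem hSm] with s hs
    rw [Real.norm_eq_abs, abs_of_nonneg (hFnn s (hSsub hs))]
    exact hle s hs
  have hFi1 : IntegrableOn F (Set.Ioc (-1 : ℝ) 0) volume :=
    hFae _ measurableSet_Ioc (fun s hs => ⟨hs.1.le, by linarith [hs.2]⟩) _
      (hg1int.const_mul (M / X)) hbd1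
  have hFi2 : IntegrableOn F (Set.Ioc (0 : ℝ) s0) volume :=
    hFae _ measurableSet_Ioc (fun s hs => ⟨by linarith [hs.1], by linarith [hs.2]⟩) _
      (hg2int.const_mul (M * A ^ (-p))) hbd2
  have hFi3 : IntegrableOn F (Set.Ioo s0 (1 : ℝ)) volume :=
    hFae _ measurableSet_Ioo (fun s hs => ⟨by linarith [hs.1], hs.2.le⟩) _
      (hg3int.const_mul (M * (A - B) ^ (-p))) hbd3
  -- splitting the integral
  have hdisj1 : Disjoint (Set.Ioc (-1 : ℝ) 0) (Set.Ioc (0 : ℝ) s0) := by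
    rw [Set.disjoint_left]; rintro x ⟨_, h2⟩ ⟨h3, _⟩; linarith
  have hdisj2 : Disjoint (Set.Ioc (-1 : ℝ) s0) (Set.Ioo s0 (1 : ℝ)) := by
    rw [Set.disjoint_left]; rintro x ⟨_, h2⟩ ⟨h3, _⟩; linarith
  have hu1 : Set.Ioc (-1 : ℝ) 0 ∪ Set.Ioc (0 : ℝ) s0 = Set.Ioc (-1 : ℝ) s0 :=
    Set.Ioc_union_Ioc_eq_Ioc (by linarith) hs00.le
  have hu2 : Set.Ioc (-1 : ℝ) s0 ∪ Set.Ioo s0 (1 : ℝ) = Set.Ioo (-1 : ℝ) 1 :=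
    Set.Ioc_union_Ioo_eq_Ioo (by linarith) hs01
  have hsplit : ∫ s in Set.Ioo (-1 : ℝ) 1, F s
      = ((∫ s in Set.Ioc (-1 : ℝ) 0, F s) + ∫ s in Set.Ioc (0 : ℝ) s0, F s)
        + ∫ s in Set.Ioo s0 (1 : ℝ), F s := by
    rw [← setIntegral_union hdisj1 measurableSet_Ioc hFi1 hFi2, ← hu2,
      setIntegral_union hdisj2 measurableSet_Ioo (by rw [← hu1]; exact hFi1.union hFi2) hFi3, hu1]
  -- the three elementary integrals
  have hI1 : ∫ s in Set.Ioc (-1 : ℝ) 0, (1 + s) ^ q = 1 / (q + 1) := by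
    rw [← intervalIntegral.integral_of_le (by norm_num : (-1 : ℝ) ≤ 0),
      intervalIntegral.integral_comp_add_left (fun u : ℝ => u ^ q) 1]
    norm_num
    rw [integral_rpow (Or.inl hq1), Real.one_rpow, Real.zero_rpow (by linarith : q + 1 ≠ 0)]
    norm_num
  have hI2 : ∫ s in Set.Ioc (0 : ℝ) s0, (1 - s) ^ (-1 - lam)
      = ((1 - s0) ^ (-lam) - 1) / lam := by
    rw [← intervalIntegral.integral_of_le hs00.le,
      intervalIntegral.integral_comp_sub_left (fun u : ℝ => u ^ (-1 - lam)) 1]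
    norm_num
    rw [integral_rpow (Or.inr ⟨by linarith, Set.notMem_uIcc_of_lt h1s0pos one_pos⟩)]
    have h1 : (-1 : ℝ) - lam + 1 = -lam := by ring
    rw [h1, Real.one_rpow]
    field_simp [hlam.ne']
    ring
  have hI3 : ∫ s in Set.Ioo s0 (1 : ℝ), (1 - s) ^ q = (1 - s0) ^ (q + 1) / (q + 1) := by
    rw [← integral_Ioc_eq_integral_Ioo, ← intervalIntegral.integral_of_le hs01.le,
      intervalIntegral.integral_comp_sub_left (fun u : ℝ => u ^ q) 1]
    norm_num
    rw [integral_rpow (Or.inl hq1), Real.zero_rpow (by linarith : q + 1 ≠ 0)]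
    norm_num
  -- bound piece 1
  have h1 : ∫ s in Set.Ioc (-1 : ℝ) 0, F s ≤ (M / (q + 1)) / X := by
    calc ∫ s in Set.Ioc (-1 : ℝ) 0, F s
        ≤ ∫ s in Set.Ioc (-1 : ℝ) 0, (M / X) * (1 + s) ^ q :=
          setIntegral_mono_on hFi1 (hg1int.const_mul (M / X)) measurableSet_Ioc hbd1
      _ = (M / X) * ∫ s in Set.Ioc (-1 : ℝ) 0, (1 + s) ^ q := integral_const_mul _ _
      _ = (M / X) * (1 / (q + 1)) := by rw [hI1]
      _ = (M / (q + 1)) / X := by ring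
  -- bound piece 2
  have eq2 : A ^ (-p) * (1 - s0) ^ (-lam) = X⁻¹ := by
    rw [h1s0, Real.div_rpow hD.le hA.le]
    have t1 : A ^ (-p) / A ^ (-lam) = (A ^ r)⁻¹ := by
      rw [← Real.rpow_sub hA, ← Real.rpow_neg hA.le]; congr 1; linarith
    calc A ^ (-p) * ((A - B) ^ (-lam) / A ^ (-lam))
        = (A ^ (-p) / A ^ (-lam)) * (A - B) ^ (-lam) := by ring
      _ = (A ^ r)⁻¹ * ((A - B) ^ lam)⁻¹ := by rw [t1, Real.rpow_neg hD.le]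
      _ = X⁻¹ := by rw [← mul_inv, hXdef]
  have h2 : ∫ s in Set.Ioc (0 : ℝ) s0, F s ≤ (M / lam) / X := by
    have hsub : ((1 - s0) ^ (-lam) - 1) / lam ≤ (1 - s0) ^ (-lam) / lam := by
      exact (div_le_div_iff_of_pos_right hlam).2 (by linarith)
    calc ∫ s in Set.Ioc (0 : ℝ) s0, F s
        ≤ ∫ s in Set.Ioc (0 : ℝ) s0, (M * A ^ (-p)) * (1 - s) ^ (-1 - lam) :=
          setIntegral_mono_on hFi2 (hg2int.const_mul _) measurableSet_Ioc hbd2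
      _ = (M * A ^ (-p)) * ∫ s in Set.Ioc (0 : ℝ) s0, (1 - s) ^ (-1 - lam) :=
          integral_const_mul _ _
      _ = (M * A ^ (-p)) * (((1 - s0) ^ (-lam) - 1) / lam) := by rw [hI2]
      _ ≤ (M * A ^ (-p)) * ((1 - s0) ^ (-lam) / lam) :=
          mul_le_mul_of_nonneg_left hsub (mul_nonneg hM0.le (Real.rpow_nonneg hA.le _))
      _ = (M / lam) * (A ^ (-p) * (1 - s0) ^ (-lam)) := by ring
      _ = (M / lam) * X⁻¹ := by rw [eq2]
      _ = (M / lam) / X := (div_eq_mul_inv _ _).symm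
  -- bound piece 3
  have eq3 : (A - B) ^ (-p) * (1 - s0) ^ r = X⁻¹ := by
    rw [h1s0, Real.div_rpow hD.le hA.le]
    have t1 : (A - B) ^ (-p) * (A - B) ^ r = ((A - B) ^ lam)⁻¹ := by
      rw [← Real.rpow_add hD, ← Real.rpow_neg hD.le]; congr 1; linarith
    calc (A - B) ^ (-p) * ((A - B) ^ r / A ^ r)
        = ((A - B) ^ (-p) * (A - B) ^ r) / A ^ r := by ring
      _ = ((A - B) ^ lam)⁻¹ / A ^ r := by rw [t1]
      _ = X⁻¹ := by rw [← hXdef, mul_inv]; ring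
  have h3 : ∫ s in Set.Ioo s0 (1 : ℝ), F s ≤ (M / (q + 1)) / X := by
    have hsplitpow : (1 - s0) ^ (q + 1) = (1 - s0) ^ b * (1 - s0) ^ r := by
      rw [← Real.rpow_add h1s0pos]; congr 1; linarith
    have hble : (1 - s0) ^ b ≤ 1 :=
      Real.rpow_le_one h1s0pos.le (by linarith) hb
    calc ∫ s in Set.Ioo s0 (1 : ℝ), F s
        ≤ ∫ s in Set.Ioo s0 (1 : ℝ), (M * (A - B) ^ (-p)) * (1 - s) ^ q :=
          setIntegral_mono_on hFi3 (hg3int.const_mul _) measurableSet_Ioo hbd3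
      _ = (M * (A - B) ^ (-p)) * ∫ s in Set.Ioo s0 (1 : ℝ), (1 - s) ^ q :=
          integral_const_mul _ _
      _ = (M * (A - B) ^ (-p)) * ((1 - s0) ^ (q + 1) / (q + 1)) := by rw [hI3]
      _ = (1 - s0) ^ b * ((M / (q + 1)) * ((A - B) ^ (-p) * (1 - s0) ^ r)) := by
          rw [hsplitpow]; ring
      _ = (1 - s0) ^ b * ((M / (q + 1)) * X⁻¹) := by rw [eq3]
      _ ≤ 1 * ((M / (q + 1)) * X⁻¹) := by
          apply mul_le_mul_of_nonneg_right hble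
          positivity
      _ = (M / (q + 1)) / X := by rw [one_mul]; ring
  -- combine
  have hXne : X ≠ 0 := ne_of_gt hX
  have hfinal : (M / (q + 1)) / X + (M / lam) / X + (M / (q + 1)) / X
      = M * (2 / (q + 1) + 1 / lam) / X := by
    field_simp
    ring
  calc ∫ s in Set.Ioo (-1 : ℝ) 1, F s
      = ((∫ s in Set.Ioc (-1 : ℝ) 0, F s) + ∫ s in Set.Ioc (0 : ℝ) s0, F s)
        + ∫ s in Set.Ioo s0 (1 : ℝ), F s := hsplit
    _ ≤ (M / (q + 1)) / X + (M / lam) / X + (M / (q + 1)) / X :=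
        add_le_add (add_le_add h1 h2) h3
    _ = M * (2 / (q + 1) + 1 / lam) / X := hfinal
end

section
/- Let $a \ge -1/2$ and $\lambda > 0$. There exists a constant $C$ such that for all $A > B > 0$, $\int_{-1}^1 \frac{(1-s^2)^{a-1/2}}{(A - Bs)^{a+1/2+\lambda}}\,ds \le \frac{C}{A^{a+1/2}(A-B)^{\lambda}}$ (when $a = -1/2$ the integral is interpreted as the sum of the integrand values at $s = \pm 1$, i.e. $\frac{1}{(A-B)^{\lambda}} + \frac{1}{(A+B)^{\lambda}}$, up to the normalizing constant). -/
/-!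
Put `u = B / A` and pull `A ^ (a + 1/2 + λ)` out of the denominator; with `q = a - 1/2` it remains
to bound `∫_{-1}^1 (1 - s²)^q / (1 - u s)^(q + 1 + λ) ds` by a constant times `(1 - u)^(-λ)`.
Since `(1 - s²)^q` is comparable to `(1 ∓ s)^q` near `±1`, split the integral at `0` and at `u`.
On `(-1, 0)` the denominator is at least `1`. On `(0, u)` it is at least `(1 - s)^(q + 1 + λ)`,
which leaves `(1 - s)^(-1 - λ)`, whose integral is at most `(1 - u)^(-λ) / λ`. On `(u, 1)` it is at
least `(1 - u)^(q + 1 + λ)`, while `∫_u^1 (1 - s)^q ds = (1 - u)^(q + 1) / (q + 1)`.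
For `a = -1/2` the bound is immediate from `A + B ≥ A - B`.
-/

open MeasureTheory Real Set intervalIntegral

lemma rpow_le_max_one_two_rpow {x : ℝ} (q : ℝ) (h1 : 1 ≤ x) (h2 : x ≤ 2) :
    x ^ q ≤ max 1 (2 ^ q) := by
  rcases le_or_gt q 0 with hq | hq
  · exact le_max_of_le_left (rpow_le_one_of_one_le_of_nonpos h1 hq)
  · exact le_max_of_le_right (rpow_le_rpow (by linarith) h2 hq.le)

lemma one_sub_sq_rpow_le {s : ℝ} (q : ℝ) (hs0 : 0 ≤ s) (hs1 : s ≤ 1) :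
    (1 - s ^ 2) ^ q ≤ max 1 (2 ^ q) * (1 - s) ^ q := by
  rw [show 1 - s ^ 2 = (1 + s) * (1 - s) by ring, mul_rpow (by linarith) (by linarith)]
  exact mul_le_mul_of_nonneg_right (rpow_le_max_one_two_rpow q (by linarith) (by linarith))
    (rpow_nonneg (by linarith) q)

lemma IntervalIntegrable.of_nonneg_of_le_Ioo {f g : ℝ → ℝ} {a b : ℝ} (hab : a ≤ b)
    (hf : Measurable f) (hg : IntervalIntegrable g volume a b)
    (hf0 : ∀ x ∈ Ioo a b, 0 ≤ f x) (hfg : ∀ x ∈ Ioo a b, f x ≤ g x) :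
    IntervalIntegrable f volume a b := by
  refine hg.mono_fun' hf.aestronglyMeasurable ?_
  rw [uIoc_of_le hab, ← Measure.restrict_congr_set Ioo_ae_eq_Ioc]
  filter_upwards [ae_restrict_mem measurableSet_Ioo] with x hx
  rw [norm_of_nonneg (hf0 x hx)]
  exact hfg x hx

section OneSubRpow

variable {q r : ℝ}

lemma intervalIntegrable_one_sub_rpow {a b : ℝ} (ha : a < 1) (hb : b < 1) :
    IntervalIntegrable (fun s => (1 - s) ^ r) volume a b := by
  refine ContinuousOn.intervalIntegrable <|
    ContinuousOn.rpow_const (f := fun s => 1 - s) (by fun_prop) fun s hs => Or.inl ?_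
  linarith [max_lt ha hb, hs.2]

lemma integral_one_sub_rpow (hq : -1 < q) (u : ℝ) :
    ∫ s in u..1, (1 - s) ^ q = (1 - u) ^ (q + 1) / (q + 1) := by
  rw [integral_comp_sub_left (fun x => x ^ q), integral_rpow (Or.inl hq), sub_self,
    zero_rpow (by linarith), sub_zero]

lemma integral_one_add_rpow (hq : -1 < q) :
    ∫ s in (-1)..0, (1 + s) ^ q = 1 / (q + 1) := by
  rw [integral_comp_add_left (fun x => x ^ q), integral_rpow (Or.inl hq)]
  norm_num [zero_rpow (show q + 1 ≠ 0 by linarith)]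

lemma integral_one_sub_rpow_neg_one_sub {lam u : ℝ} (hlam : 0 < lam) (hu : u < 1) :
    ∫ s in (0)..u, (1 - s) ^ (-1 - lam) = ((1 - u) ^ (-lam) - 1) / lam := by
  have h0 : (0 : ℝ) ∉ uIcc (1 - u) 1 := notMem_uIcc_of_lt (by linarith) one_pos
  rw [integral_comp_sub_left (fun x => x ^ (-1 - lam)), sub_zero,
    integral_rpow (Or.inr ⟨by linarith, h0⟩), one_rpow, show -1 - lam + 1 = -lam by ring]
  field_simp
  ring

end OneSubRpow

section Weight

variable {q lam u s : ℝ}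

lemma one_sub_sq_rpow_div_le_of_le {r D : ℝ} (q : ℝ) (hs0 : 0 ≤ s) (hs1 : s ≤ 1) (hD : 0 < D)
    (hDle : D ≤ (1 - u * s) ^ r) :
    (1 - s ^ 2) ^ q / (1 - u * s) ^ r ≤ max 1 (2 ^ q) * (1 - s) ^ q / D :=
  div_le_div₀ (by positivity) (one_sub_sq_rpow_le q hs0 hs1) hD hDle

lemma one_sub_sq_rpow_div_le_one_add_rpow {r : ℝ} (q : ℝ) (hu0 : 0 ≤ u) (hr : 0 ≤ r)
    (hs : s ∈ Ioo (-1) 0) :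
    (1 - s ^ 2) ^ q / (1 - u * s) ^ r ≤ max 1 (2 ^ q) * (1 + s) ^ q := by
  have h := one_sub_sq_rpow_le q (s := -s) (by linarith [hs.2]) (by linarith [hs.1])
  rw [neg_sq, sub_neg_eq_add] at h
  exact (div_le_self (rpow_nonneg (by nlinarith [hs.1, hs.2]) _)
    (one_le_rpow (by nlinarith [hs.2]) hr)).trans h

lemma one_sub_sq_rpow_div_le_one_sub_rpow_neg_one_sub (hr : 0 ≤ q + 1 + lam)
    (hu1 : u ≤ 1) (hs : s ∈ Ioo 0 u) :
    (1 - s ^ 2) ^ q / (1 - u * s) ^ (q + 1 + lam) ≤ max 1 (2 ^ q) * (1 - s) ^ (-1 - lam) := by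
  have h1s : 0 < 1 - s := by linarith [hs.2]
  calc _ ≤ max 1 (2 ^ q) * (1 - s) ^ q / (1 - s) ^ (q + 1 + lam) :=
        one_sub_sq_rpow_div_le_of_le q hs.1.le (by linarith) (rpow_pos_of_pos h1s _)
          (rpow_le_rpow h1s.le (by nlinarith [hs.1, hs.2]) hr)
    _ = max 1 (2 ^ q) * (1 - s) ^ (-1 - lam) := by
        rw [mul_div_assoc, ← rpow_sub h1s]
        ring_nf

lemma one_sub_sq_rpow_div_le_one_sub_rpow_div {r : ℝ} (q : ℝ) (hu0 : 0 ≤ u) (hr : 0 ≤ r)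
    (hs : s ∈ Ioo u 1) :
    (1 - s ^ 2) ^ q / (1 - u * s) ^ r ≤ max 1 (2 ^ q) * (1 - s) ^ q / (1 - u) ^ r := by
  have hu : 0 < 1 - u := by linarith [hs.1, hs.2]
  exact one_sub_sq_rpow_div_le_of_le q (by linarith [hs.1]) hs.2.le (rpow_pos_of_pos hu _)
    (rpow_le_rpow hu.le (by nlinarith [hs.1, hs.2]) hr)

lemma integral_one_sub_sq_rpow_div_le_add (hq : -1 < q) (hlam : 0 < lam) (hu0 : 0 ≤ u)
    (hu1 : u < 1) :
    ∫ s in (-1)..1, (1 - s ^ 2) ^ q / (1 - u * s) ^ (q + 1 + lam)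
      ≤ max 1 (2 ^ q) / (q + 1) + max 1 (2 ^ q) * (((1 - u) ^ (-lam) - 1) / lam)
        + max 1 (2 ^ q) / (q + 1) * (1 - u) ^ (-lam) := by
  set K : ℝ := max 1 (2 ^ q)
  set F := fun s : ℝ => (1 - s ^ 2) ^ q / (1 - u * s) ^ (q + 1 + lam)
  have hr : 0 ≤ q + 1 + lam := by linarith
  have hu : 0 < 1 - u := by linarith
  have hKq : 0 < K / (q + 1) := div_pos (lt_max_of_lt_left one_pos) (by linarith)
  have hF : Measurable F := by fun_prop
  have hF0 : ∀ s ∈ Ioo (-1 : ℝ) 1, 0 ≤ F s := fun s hs =>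
    div_nonneg (rpow_nonneg (by nlinarith [hs.1, hs.2]) _)
      (rpow_nonneg (by nlinarith [hs.1, hs.2]) _)
  have intL : ∫ s in (-1)..0, K * (1 + s) ^ q = K / (q + 1) := by
    rw [intervalIntegral.integral_const_mul, integral_one_add_rpow hq, mul_one_div]
  have intM : ∫ s in (0)..u, K * (1 - s) ^ (-1 - lam) = K * (((1 - u) ^ (-lam) - 1) / lam) := by
    rw [intervalIntegral.integral_const_mul, integral_one_sub_rpow_neg_one_sub hlam hu1]
  have intR : ∫ s in u..1, K * (1 - s) ^ q / (1 - u) ^ (q + 1 + lam)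
      = K / (q + 1) * (1 - u) ^ (-lam) := by
    rw [intervalIntegral.integral_div, intervalIntegral.integral_const_mul,
      integral_one_sub_rpow hq, rpow_neg hu.le, rpow_add hu (q + 1)]
    field_simp
  have hgL := intervalIntegrable_of_integral_ne_zero (intL ▸ hKq.ne')
  have hgM := (intervalIntegrable_one_sub_rpow (r := -1 - lam) one_pos hu1).const_mul K
  have hgR := intervalIntegrable_of_integral_ne_zero
    (intR ▸ (mul_pos hKq (rpow_pos_of_pos hu _)).ne')
  have hleft := fun s => one_sub_sq_rpow_div_le_one_add_rpow (s := s) q hu0 hr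
  have hmid := fun s => one_sub_sq_rpow_div_le_one_sub_rpow_neg_one_sub (s := s) hr hu1.le
  have hright := fun s => one_sub_sq_rpow_div_le_one_sub_rpow_div (s := s) q hu0 hr
  have hFL := hgL.of_nonneg_of_le_Ioo (by norm_num) hF
    (fun s hs => hF0 s ⟨hs.1, by linarith [hs.2]⟩) hleft
  have hFM := hgM.of_nonneg_of_le_Ioo hu0 hF
    (fun s hs => hF0 s ⟨by linarith [hs.1], by linarith [hs.2]⟩) hmid
  have hFR := hgR.of_nonneg_of_le_Ioo hu1.le hF
    (fun s hs => hF0 s ⟨by linarith [hs.1], hs.2⟩) hright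
  rw [← integral_add_adjacent_intervals (hFL.trans hFM) hFR,
    ← integral_add_adjacent_intervals hFL hFM]
  gcongr ?_ + ?_ + ?_
  · exact (integral_mono_on_of_le_Ioo (by norm_num) hFL hgL hleft).trans_eq intL
  · exact (integral_mono_on_of_le_Ioo hu0 hFM hgM hmid).trans_eq intM
  · exact (integral_mono_on_of_le_Ioo hu1.le hFR hgR hright).trans_eq intR

theorem integral_one_sub_sq_rpow_div_le (hq : -1 < q) (hlam : 0 < lam) (hu0 : 0 ≤ u)
    (hu1 : u < 1) :
    ∫ s in (-1)..1, (1 - s ^ 2) ^ q / (1 - u * s) ^ (q + 1 + lam)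
      ≤ (2 * max 1 (2 ^ q) / (q + 1) + max 1 (2 ^ q) / lam) * (1 - u) ^ (-lam) := by
  set K : ℝ := max 1 (2 ^ q)
  have hKq : 0 < K / (q + 1) := div_pos (lt_max_of_lt_left one_pos) (by linarith)
  have h1 : 1 ≤ (1 - u) ^ (-lam) :=
    one_le_rpow_of_pos_of_le_one_of_nonpos (by linarith) (by linarith) (by linarith)
  calc _ ≤ K / (q + 1) + K * (((1 - u) ^ (-lam) - 1) / lam) + K / (q + 1) * (1 - u) ^ (-lam) :=
        integral_one_sub_sq_rpow_div_le_add hq hlam hu0 hu1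
    _ ≤ K / (q + 1) * (1 - u) ^ (-lam) + K / lam * (1 - u) ^ (-lam)
          + K / (q + 1) * (1 - u) ^ (-lam) := by
        refine add_le_add (add_le_add (le_mul_of_one_le_right hKq.le h1) ?_) le_rfl
        rw [mul_div_assoc', div_mul_eq_mul_div]
        gcongr
        linarith
    _ = (2 * K / (q + 1) + K / lam) * (1 - u) ^ (-lam) := by ring

end Weight

lemma setIntegral_Ioo_div_rpow_eq {q r A B : ℝ} (hB : 0 ≤ B) (hBA : B < A) :
    ∫ s in Ioo (-1 : ℝ) 1, (1 - s ^ 2) ^ q / (A - B * s) ^ r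
      = (∫ s in (-1)..1, (1 - s ^ 2) ^ q / (1 - B / A * s) ^ r) / A ^ r := by
  have hA : 0 < A := hB.trans_lt hBA
  have hBA' : B / A < 1 := (div_lt_one hA).mpr hBA
  rw [integral_of_le (by norm_num), integral_Ioc_eq_integral_Ioo, ← MeasureTheory.integral_div]
  refine setIntegral_congr_fun measurableSet_Ioo fun s hs => ?_
  have hu : 0 ≤ B / A := div_nonneg hB hA.le
  rw [show A - B * s = A * (1 - B / A * s) by field_simp,
    mul_rpow hA.le (by nlinarith [hs.1, hs.2]), div_div, mul_comm]

theorem stmt_3 (a lam : ℝ) (ha : -1/2 ≤ a) (hlam : 0 < lam) :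
    ∃ C : ℝ, 0 < C ∧ ∀ A B : ℝ, 0 < B → B < A →
      (if a = -1/2 then 1 / (A - B) ^ lam + 1 / (A + B) ^ lam
       else ∫ s in Set.Ioo (-1 : ℝ) 1, (1 - s ^ 2) ^ (a - 1/2) / (A - B * s) ^ (a + 1/2 + lam))
        ≤ C / (A ^ (a + 1/2) * (A - B) ^ lam) := by
  rcases ha.eq_or_lt with rfl | ha
  · refine ⟨2, two_pos, fun A B hB hBA => ?_⟩
    rw [if_pos rfl, show (-1/2 : ℝ) + 1/2 = 0 by norm_num, rpow_zero, one_mul]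
    calc 1 / (A - B) ^ lam + 1 / (A + B) ^ lam ≤ 1 / (A - B) ^ lam + 1 / (A - B) ^ lam := by
          gcongr; linarith
      _ = 2 / (A - B) ^ lam := by ring
  · set K : ℝ := max 1 (2 ^ (a - 1/2))
    have hK : 0 < K := lt_max_of_lt_left one_pos
    have hp : 0 < a + 1/2 := by linarith
    refine ⟨2 * K / (a + 1/2) + K / lam, by positivity, fun A B hB hBA => ?_⟩
    have hA : 0 < A := hB.trans hBA
    have hAB : 0 < A - B := by linarith
    rw [if_neg ha.ne', setIntegral_Ioo_div_rpow_eq hB.le hBA]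
    have hbound := integral_one_sub_sq_rpow_div_le (q := a - 1/2) (by linarith) hlam
      (div_nonneg hB.le hA.le) ((div_lt_one hA).mpr hBA)
    rw [show a - 1/2 + 1 + lam = a + 1/2 + lam by ring, show a - 1/2 + 1 = a + 1/2 by ring]
      at hbound
    calc _ ≤ (2 * K / (a + 1/2) + K / lam) * (1 - B / A) ^ (-lam) / A ^ (a + 1/2 + lam) := by
          gcongr
      _ = _ := by
          rw [one_sub_div hA.ne', div_rpow hAB.le hA.le, rpow_neg hAB.le, rpow_neg hA.le,
            rpow_add hA]
          field_simp
end

section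
/- Let $a > 1$, $b > 0$ and $M \in \mathbb{R}$ be fixed. There exists a constant $C$ such that for every $T > 0$, $\int_0^1 \Big(\log\frac{1+\zeta}{1-\zeta}\Big)^M (1-\zeta^2)^{b-1}\,\zeta^{-a-M}\exp(-T\zeta^{-1})\,d\zeta \le C\, T^{-a+1}$. -/
/-!
Write `L(ζ) = log ((1 + ζ) / (1 - ζ))`. Applying `1 - 1/x ≤ log x ≤ x - 1` to
`x = (1 + ζ) / (1 - ζ)` gives `2ζ / (1 + ζ) ≤ L(ζ) ≤ 2ζ / (1 - ζ)`. Hence on `(0, 1/2]` the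
integrand is at most a constant times `ζ ^ (-a) * exp (-T / ζ)`, whose integral over `(0, ∞)` is
`Γ(a - 1) T ^ (1 - a)` (substitute `ζ = 1 / y`). On `(1/2, 1)` the logarithmic singularity is
absorbed by `(1 - ζ) ^ (b / 2)`, so the integrand is at most a constant times
`exp (-T) * (1 - ζ) ^ (b / 2 - 1)`, which is integrable, and `exp (-T) ≤ c T ^ (1 - a)`.
-/

open MeasureTheory Real Set

theorem rpow_mul_exp_neg_le {p y : ℝ} (hp : 0 < p) (hy : 0 < y) :
    y ^ p * exp (-y) ≤ p ^ p * exp (-p) := by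
  have h : log (y / p) ≤ y / p - 1 := log_le_sub_one_of_pos (div_pos hy hp)
  rw [log_div hy.ne' hp.ne'] at h
  have h' : p * (log y - log p) ≤ y - p := by
    calc p * (log y - log p) ≤ p * (y / p - 1) := mul_le_mul_of_nonneg_left h hp.le
      _ = y - p := by field_simp
  rw [rpow_def_of_pos hy, rpow_def_of_pos hp, ← exp_add, ← exp_add, exp_le_exp]
  linarith

theorem exp_neg_le_mul_rpow_neg {p T : ℝ} (hp : 0 < p) (hT : 0 < T) :
    exp (-T) ≤ p ^ p * exp (-p) * T ^ (-p) := by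
  rw [rpow_neg hT.le, ← div_eq_mul_inv, le_div_iff₀ (by positivity), mul_comm]
  exact rpow_mul_exp_neg_le hp hT

theorem rpow_le_max_of_mem_Icc {x lo hi : ℝ} (hlo : 0 < lo) (hx : x ∈ Icc lo hi) (p : ℝ) :
    x ^ p ≤ max (lo ^ p) (hi ^ p) := by
  rcases le_total 0 p with hp | hp
  · exact le_max_of_le_right (rpow_le_rpow (hlo.le.trans hx.1) hx.2 hp)
  · exact le_max_of_le_left (rpow_le_rpow_of_nonpos hlo hx.1 hp)

theorem two_mul_div_one_add_le_log {ζ : ℝ} (h0 : 0 ≤ ζ) (h1 : ζ < 1) :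
    2 * ζ / (1 + ζ) ≤ log ((1 + ζ) / (1 - ζ)) := by
  have h := one_sub_inv_le_log_of_pos (x := (1 + ζ) / (1 - ζ)) (by apply div_pos <;> linarith)
  rwa [inv_div, one_sub_div (by linarith), show 1 + ζ - (1 - ζ) = 2 * ζ by ring] at h

theorem log_le_two_mul_div_one_sub {ζ : ℝ} (h0 : 0 ≤ ζ) (h1 : ζ < 1) :
    log ((1 + ζ) / (1 - ζ)) ≤ 2 * ζ / (1 - ζ) := by
  have h := log_le_sub_one_of_pos (x := (1 + ζ) / (1 - ζ)) (by apply div_pos <;> linarith)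
  rwa [div_sub_one (by linarith), show 1 + ζ - (1 - ζ) = 2 * ζ by ring] at h

-- The integrand of `integral_comp_rpow_Ioi` for `p = -1` and `g y = y ^ (a - 2) * exp (-(T * y))`.
theorem comp_rpow_neg_one_integrand_eq {a T x : ℝ} (hx : 0 < x) :
    (|(-1 : ℝ)| * x ^ ((-1 : ℝ) - 1)) • ((x ^ (-1 : ℝ)) ^ (a - 2) * exp (-(T * x ^ (-1 : ℝ))))
      = x ^ (-a) * exp (-(T * x⁻¹)) := by
  rw [smul_eq_mul, abs_neg, abs_one, one_mul, rpow_neg_one, ← mul_assoc, ← rpow_neg_one x,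
    ← rpow_mul hx.le, ← rpow_add hx, rpow_neg_one]
  ring_nf

theorem integrableOn_rpow_neg_mul_exp_neg_mul_inv {a T : ℝ} (ha : 1 < a) (hT : 0 < T) :
    IntegrableOn (fun x ↦ x ^ (-a) * exp (-(T * x⁻¹))) (Ioi 0) := by
  have h := integrableOn_rpow_mul_exp_neg_mul_rpow (s := a - 2) (p := 1) (by linarith) one_pos hT
  simp only [rpow_one, neg_mul] at h
  exact ((integrableOn_Ioi_comp_rpow_iff _ (p := -1) (by norm_num)).mpr h).congr_fun
    (fun x hx ↦ comp_rpow_neg_one_integrand_eq hx) measurableSet_Ioi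

theorem integral_rpow_neg_mul_exp_neg_mul_inv {a T : ℝ} (ha : 1 < a) (hT : 0 < T) :
    ∫ x in Ioi 0, x ^ (-a) * exp (-(T * x⁻¹)) = Gamma (a - 1) * T ^ (1 - a) := by
  rw [← setIntegral_congr_fun measurableSet_Ioi
      (fun x hx ↦ comp_rpow_neg_one_integrand_eq (a := a) (T := T) hx),
    integral_comp_rpow_Ioi (fun y ↦ y ^ (a - 2) * exp (-(T * y))) (by norm_num),
    show a - 2 = (a - 1) - 1 by ring,
    integral_rpow_mul_exp_neg_mul_Ioi (by linarith) hT, one_div, inv_rpow hT.le, ← rpow_neg hT.le,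
    neg_sub, mul_comm]

theorem setIntegral_Ioo_rpow_neg_mul_exp_neg_mul_inv_le {a T : ℝ} (ha : 1 < a) (hT : 0 < T) :
    ∫ x in Ioo 0 1, x ^ (-a) * exp (-(T * x⁻¹)) ≤ Gamma (a - 1) * T ^ (1 - a) := by
  rw [← integral_rpow_neg_mul_exp_neg_mul_inv ha hT]
  refine setIntegral_mono_set (integrableOn_rpow_neg_mul_exp_neg_mul_inv ha hT)
    (ae_restrict_of_forall_mem measurableSet_Ioi fun x hx ↦ ?_) Ioo_subset_Ioi_self.eventuallyLE
  exact mul_nonneg (rpow_nonneg (le_of_lt hx) _) (exp_pos _).le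

theorem integrableOn_one_sub_rpow_Ioo {s : ℝ} (hs : -1 < s) :
    IntegrableOn (fun x : ℝ ↦ (1 - x) ^ s) (Ioo 0 1) := by
  have h := (intervalIntegral.intervalIntegrable_rpow' hs (a := 1) (b := 0)).comp_sub_left 1
  rw [sub_self, sub_zero] at h
  exact (intervalIntegrable_iff_integrableOn_Ioo_of_le zero_le_one).mp h

theorem log_rpow_le_rpow_div {x M ε : ℝ} (hx : 1 ≤ x) (hM : 0 < M) (hε : 0 < ε) :
    log x ^ M ≤ x ^ ε / (ε / M) ^ M := by
  have hδ : 0 < ε / M := div_pos hε hM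
  calc log x ^ M ≤ (x ^ (ε / M) / (ε / M)) ^ M :=
        rpow_le_rpow (log_nonneg hx) (log_le_rpow_div (by linarith) hδ) hM.le
    _ = x ^ ε / (ε / M) ^ M := by
        rw [div_rpow (by positivity) hδ.le, ← rpow_mul (by linarith), div_mul_cancel₀ _ hM.ne']

theorem exists_log_rpow_mul_one_sub_rpow_le (M : ℝ) {ε : ℝ} (hε : 0 < ε) :
    ∃ K, 0 < K ∧ ∀ ζ ∈ Ioo (1 / 2 : ℝ) 1, log ((1 + ζ) / (1 - ζ)) ^ M * (1 - ζ) ^ ε ≤ K := by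
  rcases le_or_gt M 0 with hM | hM
  · refine ⟨(2 / 3) ^ M, by positivity, fun ζ ⟨hζ₀, hζ₁⟩ ↦ ?_⟩
    have hL : 2 / 3 ≤ log ((1 + ζ) / (1 - ζ)) := by
      refine le_trans ?_ (two_mul_div_one_add_le_log (by linarith) hζ₁)
      rw [le_div_iff₀ (by linarith)]
      linarith
    calc log ((1 + ζ) / (1 - ζ)) ^ M * (1 - ζ) ^ ε ≤ (2 / 3) ^ M * 1 := by
          gcongr ?_ * ?_
          · exact rpow_le_rpow_of_nonpos (by norm_num) hL hM
          · exact rpow_le_one (by linarith) (by linarith) hε.le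
      _ = (2 / 3) ^ M := mul_one _
  · refine ⟨2 ^ ε / (ε / M) ^ M, by positivity, fun ζ ⟨hζ₀, hζ₁⟩ ↦ ?_⟩
    have h₁ : 0 < 1 - ζ := by linarith
    have hL : log ((1 + ζ) / (1 - ζ)) ≤ log (2 / (1 - ζ)) :=
      log_le_log (by apply div_pos <;> linarith) (by gcongr; linarith)
    calc log ((1 + ζ) / (1 - ζ)) ^ M * (1 - ζ) ^ ε
        ≤ (2 / (1 - ζ)) ^ ε / (ε / M) ^ M * (1 - ζ) ^ ε := by
          gcongr ?_ * _
          have h1le : 1 ≤ (1 + ζ) / (1 - ζ) := by rw [le_div_iff₀ h₁]; linarith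
          calc log ((1 + ζ) / (1 - ζ)) ^ M ≤ log (2 / (1 - ζ)) ^ M :=
                rpow_le_rpow (log_nonneg h1le) hL hM.le
            _ ≤ (2 / (1 - ζ)) ^ ε / (ε / M) ^ M :=
                log_rpow_le_rpow_div (h1le.trans (by gcongr; linarith)) hM hε
      _ = 2 ^ ε / (ε / M) ^ M := by
          rw [div_rpow (by norm_num) h₁.le]
          field_simp

noncomputable def logRatioIntegrand (a b M T ζ : ℝ) : ℝ :=
  log ((1 + ζ) / (1 - ζ)) ^ M * (1 - ζ ^ 2) ^ (b - 1) * ζ ^ (-a - M) * exp (-(T * ζ⁻¹))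

theorem logRatioIntegrand_nonneg (a b M T : ℝ) {ζ : ℝ} (hζ : ζ ∈ Ioo (0 : ℝ) 1) :
    0 ≤ logRatioIntegrand a b M T ζ := by
  obtain ⟨hζ₀, hζ₁⟩ := hζ
  have hL : 0 ≤ log ((1 + ζ) / (1 - ζ)) :=
    (div_nonneg (by linarith) (by linarith)).trans (two_mul_div_one_add_le_log hζ₀.le hζ₁)
  have hsq : 0 ≤ 1 - ζ ^ 2 := by nlinarith
  unfold logRatioIntegrand
  positivity

theorem exists_logRatioIntegrand_le_of_le_half (a b M : ℝ) :
    ∃ K, 0 < K ∧ ∀ T ζ, 0 < ζ → ζ ≤ 1 / 2 →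
      logRatioIntegrand a b M T ζ ≤ K * (ζ ^ (-a) * exp (-(T * ζ⁻¹))) := by
  refine ⟨max (1 ^ M) (4 ^ M) * max ((3 / 4) ^ (b - 1)) (1 ^ (b - 1)), by positivity,
    fun T ζ hζ₀ hζ ↦ ?_⟩
  set L := log ((1 + ζ) / (1 - ζ))
  have hlow : 2 * ζ / (1 + ζ) ≤ L := two_mul_div_one_add_le_log hζ₀.le (by linarith)
  have hL₀ : 0 ≤ L := hlow.trans' (by positivity)
  have hL : L * ζ⁻¹ ∈ Icc 1 4 := by
    rw [← div_eq_mul_inv, mem_Icc, one_le_div₀ hζ₀, div_le_iff₀ hζ₀]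
    constructor
    · refine le_trans ?_ hlow
      rw [le_div_iff₀ (by linarith)]
      nlinarith
    · refine (log_le_two_mul_div_one_sub hζ₀.le (by linarith)).trans ?_
      rw [div_le_iff₀ (by linarith)]
      nlinarith
  have hsq : 1 - ζ ^ 2 ∈ Icc (3 / 4) 1 := ⟨by nlinarith, by nlinarith⟩
  have hsplit : logRatioIntegrand a b M T ζ
      = (L * ζ⁻¹) ^ M * (1 - ζ ^ 2) ^ (b - 1) * (ζ ^ (-a) * exp (-(T * ζ⁻¹))) := by
    rw [logRatioIntegrand, mul_rpow hL₀ (inv_nonneg.mpr hζ₀.le), inv_rpow hζ₀.le, rpow_sub hζ₀]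
    ring
  rw [hsplit]
  gcongr ?_ * ?_ * _
  · exact rpow_nonneg (hsq.1.trans' (by norm_num)) _
  · exact rpow_le_max_of_mem_Icc one_pos hL M
  · exact rpow_le_max_of_mem_Icc (by norm_num) hsq (b - 1)

theorem exists_logRatioIntegrand_le_of_half_lt (a b M : ℝ) (hb : 0 < b) :
    ∃ K, 0 < K ∧ ∀ T, 0 ≤ T → ∀ ζ ∈ Ioo (1 / 2 : ℝ) 1,
      logRatioIntegrand a b M T ζ ≤ K * exp (-T) * (1 - ζ) ^ (b / 2 - 1) := by
  obtain ⟨K, hK, hlog⟩ := exists_log_rpow_mul_one_sub_rpow_le M (half_pos hb)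
  refine ⟨K * max ((3 / 2) ^ (b - 1)) (2 ^ (b - 1)) * max ((1 / 2) ^ (-a - M)) (1 ^ (-a - M)),
    by positivity, fun T hT ζ hζ ↦ ?_⟩
  obtain ⟨hζ₀, hζ₁⟩ := hζ
  have h₁ : 0 < 1 - ζ := by linarith
  have hsplit : logRatioIntegrand a b M T ζ
      = log ((1 + ζ) / (1 - ζ)) ^ M * (1 - ζ) ^ (b / 2) * (1 + ζ) ^ (b - 1) * ζ ^ (-a - M)
        * exp (-(T * ζ⁻¹)) * (1 - ζ) ^ (b / 2 - 1) := by
    rw [logRatioIntegrand, show 1 - ζ ^ 2 = (1 - ζ) * (1 + ζ) by ring,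
      mul_rpow h₁.le (by linarith), show b - 1 = b / 2 + (b / 2 - 1) by ring, rpow_add h₁,
      show b / 2 + (b / 2 - 1) = b - 1 by ring]
    ring
  rw [hsplit]
  gcongr ?_ * ?_ * ?_ * ?_ * _
  · exact hlog ζ ⟨hζ₀, hζ₁⟩
  · exact rpow_le_max_of_mem_Icc (by norm_num) ⟨by linarith, by linarith⟩ _
  · exact rpow_le_max_of_mem_Icc (by norm_num) ⟨hζ₀.le, hζ₁.le⟩ _
  · rw [exp_le_exp, neg_le_neg_iff]
    exact le_mul_of_one_le_right hT (one_le_inv₀ (by linarith) |>.mpr hζ₁.le)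

theorem exists_logRatioIntegrand_le (a b M : ℝ) (hb : 0 < b) :
    ∃ K₁ K₂, 0 < K₁ ∧ 0 < K₂ ∧ ∀ T, 0 ≤ T → ∀ ζ ∈ Ioo (0 : ℝ) 1,
      logRatioIntegrand a b M T ζ
        ≤ K₁ * (ζ ^ (-a) * exp (-(T * ζ⁻¹))) + K₂ * exp (-T) * (1 - ζ) ^ (b / 2 - 1) := by
  obtain ⟨K₁, hK₁, hle₁⟩ := exists_logRatioIntegrand_le_of_le_half a b M
  obtain ⟨K₂, hK₂, hle₂⟩ := exists_logRatioIntegrand_le_of_half_lt a b M hb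
  refine ⟨K₁, K₂, hK₁, hK₂, fun T hT ζ ⟨hζ₀, hζ₁⟩ ↦ ?_⟩
  have h₁ : 0 ≤ (1 - ζ) ^ (b / 2 - 1) := rpow_nonneg (by linarith) _
  rcases le_or_gt ζ (1 / 2) with hζ | hζ
  · have := hle₁ T ζ hζ₀ hζ
    have : 0 ≤ K₂ * exp (-T) * (1 - ζ) ^ (b / 2 - 1) := by positivity
    linarith
  · have := hle₂ T hT ζ ⟨hζ, hζ₁⟩
    have : 0 ≤ K₁ * (ζ ^ (-a) * exp (-(T * ζ⁻¹))) := by positivity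
    linarith

theorem stmt_10 (a b M : ℝ) (ha : 1 < a) (hb : 0 < b) :
    ∃ C : ℝ, 0 < C ∧ ∀ T : ℝ, 0 < T →
      ∫ ζ in Set.Ioo (0 : ℝ) 1,
          (Real.log ((1 + ζ) / (1 - ζ))) ^ M * (1 - ζ ^ 2) ^ (b - 1) * ζ ^ (-a - M) *
            Real.exp (-(T * ζ⁻¹))
        ≤ C * T ^ (-a + 1) := by
  obtain ⟨K₁, K₂, hK₁, hK₂, hle⟩ := exists_logRatioIntegrand_le a b M hb
  have hw := integrableOn_one_sub_rpow_Ioo (s := b / 2 - 1) (by linarith)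
  set W := ∫ ζ in Ioo (0 : ℝ) 1, (1 - ζ) ^ (b / 2 - 1)
  have hW : 0 ≤ W :=
    setIntegral_nonneg measurableSet_Ioo fun ζ hζ ↦ rpow_nonneg (by linarith [hζ.2]) _
  set c := (a - 1) ^ (a - 1) * exp (-(a - 1))
  refine ⟨K₁ * Gamma (a - 1) + K₂ * c * W, by positivity, fun T hT ↦ ?_⟩
  have hk : IntegrableOn (fun ζ : ℝ ↦ ζ ^ (-a) * exp (-(T * ζ⁻¹))) (Ioo 0 1) :=
    (integrableOn_rpow_neg_mul_exp_neg_mul_inv ha hT).mono_set Ioo_subset_Ioi_self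
  calc ∫ ζ in Ioo (0 : ℝ) 1, logRatioIntegrand a b M T ζ
      ≤ ∫ ζ in Ioo (0 : ℝ) 1,
          (K₁ * (ζ ^ (-a) * exp (-(T * ζ⁻¹))) + K₂ * exp (-T) * (1 - ζ) ^ (b / 2 - 1)) :=
        integral_mono_of_nonneg
          (ae_restrict_of_forall_mem measurableSet_Ioo fun ζ ↦ logRatioIntegrand_nonneg a b M T)
          ((hk.const_mul K₁).add (hw.const_mul _))
          (ae_restrict_of_forall_mem measurableSet_Ioo (hle T hT.le))
    _ = K₁ * (∫ ζ in Ioo (0 : ℝ) 1, ζ ^ (-a) * exp (-(T * ζ⁻¹))) + K₂ * exp (-T) * W := by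
        rw [integral_add (hk.const_mul K₁) (hw.const_mul _), integral_const_mul,
          integral_const_mul]
    _ ≤ K₁ * (Gamma (a - 1) * T ^ (1 - a)) + K₂ * (c * T ^ (-(a - 1))) * W := by
        gcongr
        · exact setIntegral_Ioo_rpow_neg_mul_exp_neg_mul_inv_le ha hT
        · exact exp_neg_le_mul_rpow_neg (by linarith) hT
    _ = (K₁ * Gamma (a - 1) + K₂ * c * W) * T ^ (-a + 1) := by ring_nf
end
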